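/- Let B, Γ ∈ ℝ^{N×M} both have rank M, let Λ ∈ ℝ^{N×N} be symmetric positive definite, and set Σ_D := B Bᵀ + Λ and Σ_{U|D} := I_M − Bᵀ Σ_D⁻¹ B. Let B̌, Γ̌ ∈ ℝ^{N×M} satisfy B̌ B̌ᵀ = B Bᵀ and Γ̌ Γ̌ᵀ = Γ Γᵀ, and set Σ̌_{U|D} := I_M − B̌ᵀ Σ_D⁻¹ B̌. Then there exists an orthogonal matrix Θ ∈ ℝ^{M×M} such that Γ Σ_{U|D}^{-1/2} Bᵀ Σ_D⁻¹ = Γ̌ Θ Σ̌_{U|D}^{-1/2} B̌ᵀ Σ_D⁻¹. -/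

import Mathlib

open scoped Classical

/-- The (unique) symmetric positive semidefinite square root of a positive semidefinite
real matrix, extended by `0` to arbitrary matrices. -/
noncomputable def matSqrt {M : ℕ} (S : Matrix (Fin M) (Fin M) ℝ) : Matrix (Fin M) (Fin M) ℝ :=
  if h : S.PosSemidef then
    h.1.eigenvectorUnitary.1 * Matrix.diagonal ((↑) ∘ (√·) ∘ h.1.eigenvalues) *
      (star h.1.eigenvectorUnitary : Matrix (Fin M) (Fin M) ℝ)
  else 0

open scoped MatrixOrder in
lemma matSqrt_eq_cfc {M : ℕ} {S : Matrix (Fin M) (Fin M) ℝ} (hS : S.PosSemidef) :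
    matSqrt S = CFC.sqrt S := by
  rw [CFC.sqrt_eq_cfc, cfc_nnreal_eq_real _ S, hS.1.cfc_eq]
  unfold matSqrt
  rw [dif_pos hS]
  simp only [Matrix.IsHermitian.cfc, Unitary.conjStarAlgAut_apply, Real.coe_sqrt,
    Real.coe_toNNReal']
  have hmax : ∀ j, max (hS.1.eigenvalues j) 0 = hS.1.eigenvalues j :=
    fun j => max_eq_left (hS.eigenvalues_nonneg j)
  simp [Function.comp_def, hmax]

open scoped MatrixOrder in
lemma matSqrt_psd {M : ℕ} {S : Matrix (Fin M) (Fin M) ℝ} (hS : S.PosSemidef) :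
    (matSqrt S).PosSemidef := by
  rw [matSqrt_eq_cfc hS]; exact Matrix.nonneg_iff_posSemidef.mp (CFC.sqrt_nonneg S)

open scoped MatrixOrder in
lemma matSqrt_mul_self' {M : ℕ} {S : Matrix (Fin M) (Fin M) ℝ} (hS : S.PosSemidef) :
    matSqrt S * matSqrt S = S := by
  rw [matSqrt_eq_cfc hS]; exact CFC.sqrt_mul_sqrt_self S hS.nonneg

open scoped MatrixOrder in
lemma eq_matSqrt {M : ℕ} {R S : Matrix (Fin M) (Fin M) ℝ} (hR : R.PosSemidef)
    (hS : S.PosSemidef) (h : R ^ 2 = S) : R = matSqrt S := by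
  rw [matSqrt_eq_cfc hS]
  exact ((CFC.sqrt_eq_iff S R hS.nonneg hR.nonneg).mpr (by rw [← sq]; exact h)).symm

open Matrix

lemma gram_factor {N M : ℕ} (A C : Matrix (Fin N) (Fin M) ℝ)
    (hA : A.rank = M) (h : A * Aᵀ = C * Cᵀ) :
    ∃ Q : Matrix (Fin M) (Fin M) ℝ, Qᵀ * Q = 1 ∧ Q * Qᵀ = 1 ∧ C = A * Q := by
  classical
  set G : Matrix (Fin M) (Fin M) ℝ := Aᵀ * A with hG
  have hGrank : G.rank = M := by rw [hG, Matrix.rank_transpose_mul_self, hA]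
  have hGU : IsUnit G := by
    rw [← Matrix.mulVec_injective_iff_isUnit]
    have hr : LinearMap.range G.mulVecLin = ⊤ := by
      apply Submodule.eq_top_of_finrank_eq
      rw [Module.finrank_fin_fun]
      exact hGrank
    have hinj : Function.Injective G.mulVecLin :=
      LinearMap.injective_iff_surjective.mpr (LinearMap.range_eq_top.mp hr)
    intro x y hxy
    exact hinj (by simpa [Matrix.mulVecLin_apply] using hxy)
  have hGdet : IsUnit G.det := (Matrix.isUnit_iff_isUnit_det G).mp hGU
  have hGi1 : G⁻¹ * G = 1 := Matrix.nonsing_inv_mul G hGdet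
  have hGi2 : G * G⁻¹ = 1 := Matrix.mul_nonsing_inv G hGdet
  have hGisym : (G⁻¹)ᵀ = G⁻¹ := by
    rw [Matrix.transpose_nonsing_inv,
      show Gᵀ = G by rw [hG, Matrix.transpose_mul, Matrix.transpose_transpose]]
  set P : Matrix (Fin N) (Fin N) ℝ := A * G⁻¹ * Aᵀ with hP
  have hPsym : Pᵀ = P := by
    simp [hP, Matrix.transpose_mul, Matrix.transpose_transpose, hGisym, Matrix.mul_assoc]
  have hPCC : P * (C * Cᵀ) = C * Cᵀ := by
    rw [← h, hP]
    calc A * G⁻¹ * Aᵀ * (A * Aᵀ) = A * (G⁻¹ * (Aᵀ * A)) * Aᵀ := by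
          simp only [Matrix.mul_assoc]
      _ = A * Aᵀ := by rw [← hG, hGi1, Matrix.mul_one]
  have hCCP : C * Cᵀ * P = C * Cᵀ := by
    have := congrArg Matrix.transpose hPCC
    simpa [Matrix.transpose_mul, Matrix.transpose_transpose, hPsym, Matrix.mul_assoc]
      using this
  have hPC : P * C = C := by
    set E : Matrix (Fin N) (Fin M) ℝ := P * C - C with hE
    have hEEt : E * Eᵀ = 0 := by
      have expand : E * Eᵀ = P * (C * Cᵀ) * P - P * (C * Cᵀ) - C * Cᵀ * P + C * Cᵀ := by
        rw [hE]
        simp only [Matrix.transpose_sub, Matrix.transpose_mul, hPsym, Matrix.sub_mul,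
          Matrix.mul_sub, Matrix.mul_assoc]
        noncomm_ring
      rw [expand, hPCC, hCCP]
      abel
    have hE0 : E = 0 := by
      rw [← Matrix.self_mul_conjTranspose_eq_zero (A := E),
        Matrix.conjTranspose_eq_transpose_of_trivial]
      exact hEEt
    have := sub_eq_zero.mp (hE ▸ hE0)
    exact this
  set X : Matrix (Fin M) (Fin M) ℝ := G⁻¹ * (Aᵀ * C) with hXdef
  have hAX : A * X = C := by
    rw [hXdef]
    calc A * (G⁻¹ * (Aᵀ * C)) = P * C := by rw [hP]; simp only [Matrix.mul_assoc]
      _ = C := hPC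
  have hXXt : X * Xᵀ = 1 := by
    have key : Aᵀ * (C * Cᵀ) * A = G * G := by
      rw [← h, hG]; simp only [Matrix.mul_assoc]
    calc X * Xᵀ = G⁻¹ * (Aᵀ * (C * Cᵀ) * A) * G⁻¹ := by
          rw [hXdef]
          simp only [Matrix.transpose_mul, Matrix.transpose_transpose, hGisym,
            Matrix.mul_assoc]
      _ = G⁻¹ * (G * G) * G⁻¹ := by rw [key]
      _ = 1 := by
          rw [← Matrix.mul_assoc, ← Matrix.mul_assoc, hGi1, Matrix.one_mul, hGi2]
  exact ⟨X, mul_eq_one_comm.mp hXXt, hXXt, hAX.symm⟩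

lemma psd_conj {M : ℕ} {S : Matrix (Fin M) (Fin M) ℝ} (hS : S.PosSemidef)
    (Q : Matrix (Fin M) (Fin M) ℝ) : (Qᵀ * S * Q).PosSemidef := by
  have := hS.mul_mul_conjTranspose_same Qᵀ
  simpa [Matrix.conjTranspose_eq_transpose_of_trivial, Matrix.transpose_transpose] using this

lemma matSqrt_conj {M : ℕ} (S Q : Matrix (Fin M) (Fin M) ℝ)
    (h1 : Qᵀ * Q = 1) (h2 : Q * Qᵀ = 1) :
    matSqrt (Qᵀ * S * Q) = Qᵀ * matSqrt S * Q := by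
  by_cases hS : S.PosSemidef
  · have hSQ : (Qᵀ * S * Q).PosSemidef := psd_conj hS Q
    have hR : (Qᵀ * matSqrt S * Q).PosSemidef := psd_conj (matSqrt_psd hS) Q
    have hsq : (Qᵀ * matSqrt S * Q) ^ 2 = Qᵀ * S * Q := by
      rw [pow_two]
      calc Qᵀ * matSqrt S * Q * (Qᵀ * matSqrt S * Q)
          = Qᵀ * matSqrt S * (Q * Qᵀ) * (matSqrt S * Q) := by simp only [Matrix.mul_assoc]
        _ = Qᵀ * (matSqrt S * matSqrt S) * Q := by rw [h2]; simp only [Matrix.mul_one, Matrix.mul_assoc]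
        _ = Qᵀ * S * Q := by rw [matSqrt_mul_self' hS]
    exact (eq_matSqrt hR hSQ hsq).symm
  · have hSQ : ¬ (Qᵀ * S * Q).PosSemidef := by
      intro hc
      apply hS
      have := psd_conj hc Qᵀ
      rw [Matrix.transpose_transpose] at this
      have heq : Q * (Qᵀ * S * Q) * Qᵀ = S := by
        calc Q * (Qᵀ * S * Q) * Qᵀ = (Q * Qᵀ) * S * (Q * Qᵀ) := by
              simp only [Matrix.mul_assoc]
          _ = S := by rw [h2, Matrix.one_mul, Matrix.mul_one]
      rwa [heq] at this
    unfold matSqrt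
    rw [dif_neg hS, dif_neg hSQ]
    simp

/-- **Representation part of Proposition 2 (partial identification).**
The omitted variable bias matrix `C = Γ Σ_{U|D}^{-1/2} Bᵀ Σ_D⁻¹` can be written, in terms of
any factorizations `Γ̌, B̌` of the Gram matrices `ΓΓᵀ`, `BBᵀ`, as
`Γ̌ Θ Σ̌_{U|D}^{-1/2} B̌ᵀ Σ_D⁻¹` for some orthogonal `Θ`. -/
theorem bias_matrix_partial_identification
    {N M : ℕ}
    (B Γ : Matrix (Fin N) (Fin M) ℝ)
    (hB : B.rank = M) (hΓ : Γ.rank = M)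
    (Λ : Matrix (Fin N) (Fin N) ℝ) (hΛ : Λ.PosDef)
    (SD : Matrix (Fin N) (Fin N) ℝ) (hSD : SD = B * B.transpose + Λ)
    (Sig : Matrix (Fin M) (Fin M) ℝ)
    (hSig : Sig = (1 : Matrix (Fin M) (Fin M) ℝ) - B.transpose * SD⁻¹ * B)
    (Bch Γch : Matrix (Fin N) (Fin M) ℝ)
    (hBch : Bch * Bch.transpose = B * B.transpose)
    (hΓch : Γch * Γch.transpose = Γ * Γ.transpose)
    (Sigch : Matrix (Fin M) (Fin M) ℝ)
    (hSigch : Sigch = (1 : Matrix (Fin M) (Fin M) ℝ) - Bch.transpose * SD⁻¹ * Bch) :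
    ∃ Θ : Matrix (Fin M) (Fin M) ℝ, Θ.transpose * Θ = 1 ∧
      Γ * (matSqrt Sig)⁻¹ * B.transpose * SD⁻¹ =
        Γch * Θ * (matSqrt Sigch)⁻¹ * Bch.transpose * SD⁻¹ := by
  obtain ⟨P, hP1, hP2, hPeq⟩ := gram_factor Γ Γch hΓ hΓch.symm
  obtain ⟨Q, hQ1, hQ2, hQeq⟩ := gram_factor B Bch hB hBch.symm
  have hΓ' : Γ = Γch * Pᵀ := by
    rw [hPeq, Matrix.mul_assoc, hP2, Matrix.mul_one]
  have hB' : B = Bch * Qᵀ := by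
    rw [hQeq, Matrix.mul_assoc, hQ2, Matrix.mul_one]
  have hBt : Bᵀ = Q * Bchᵀ := by
    rw [hB', Matrix.transpose_mul, Matrix.transpose_transpose]
  have hSigconj : Sig = Q * Sigch * Qᵀ := by
    rw [hSig, hSigch, hBt]
    have hBtt : B = (Q * Bchᵀ)ᵀ := by rw [← hBt, Matrix.transpose_transpose]
    rw [hBtt, Matrix.transpose_mul, Matrix.transpose_transpose]
    calc (1 : Matrix (Fin M) (Fin M) ℝ) - Q * Bchᵀ * SD⁻¹ * (Bch * Qᵀ)
        = Q * Qᵀ - Q * (Bchᵀ * SD⁻¹ * Bch) * Qᵀ := by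
          rw [hQ2]; simp only [Matrix.mul_assoc]
      _ = Q * ((1 : Matrix (Fin M) (Fin M) ℝ) - Bchᵀ * SD⁻¹ * Bch) * Qᵀ := by
          rw [Matrix.mul_sub, Matrix.sub_mul, Matrix.mul_one]
  have hMS : matSqrt Sig = Q * matSqrt Sigch * Qᵀ := by
    have := matSqrt_conj Sigch Qᵀ (by rwa [Matrix.transpose_transpose])
      (by rwa [Matrix.transpose_transpose])
    rw [Matrix.transpose_transpose] at this
    rw [hSigconj, this]
  have hQinv : Q⁻¹ = Qᵀ := Matrix.inv_eq_left_inv hQ1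
  have hQtinv : (Qᵀ)⁻¹ = Q := Matrix.inv_eq_left_inv hQ2
  have hInv : (matSqrt Sig)⁻¹ = Q * (matSqrt Sigch)⁻¹ * Qᵀ := by
    rw [hMS, Matrix.mul_inv_rev, Matrix.mul_inv_rev, hQinv, hQtinv]
    simp only [Matrix.mul_assoc]
  refine ⟨Pᵀ * Q, ?_, ?_⟩
  · rw [Matrix.transpose_mul, Matrix.transpose_transpose]
    calc Qᵀ * P * (Pᵀ * Q) = Qᵀ * (P * Pᵀ) * Q := by simp only [Matrix.mul_assoc]
      _ = 1 := by rw [hP2, Matrix.mul_one, hQ1]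
  · rw [hΓ', hBt, hInv]
    calc Γch * Pᵀ * (Q * (matSqrt Sigch)⁻¹ * Qᵀ) * (Q * Bchᵀ) * SD⁻¹
        = Γch * Pᵀ * Q * (matSqrt Sigch)⁻¹ * (Qᵀ * Q) * Bchᵀ * SD⁻¹ := by
          simp only [Matrix.mul_assoc]
      _ = Γch * (Pᵀ * Q) * (matSqrt Sigch)⁻¹ * Bchᵀ * SD⁻¹ := by
          rw [hQ1]; simp only [Matrix.mul_one, Matrix.mul_assoc]
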